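/- Finite-horizon decomposition of the state-option transition path Fisher information matrix. For every horizon T, every ϑ ∈ ℝⁿ, and all indices i, j: (G^T_ϑ)_{ij} = −∑_{t=1}^{T-1} ∑_{s',o} d_t(s',o) · ∂_i ln β(o,s',ϑ) · ∂_j ln β'(o,s',ϑ); that is, the Fisher information matrix of the T-step state–option transition path distribution decomposes as minus the sum over time steps of the marginal-weighted outer products of the termination score ∂ ln β and the continuation score ∂ ln β'. -/

import Mathlib

open scoped Classical

/-- Partial derivative of `f : ℝⁿ → ℝ` with respect to the `i`-th coordinate of `ϑ`. -/
noncomputable def pd {n : ℕ} (i : Fin n) (f : (Fin n → ℝ) → ℝ) (ϑ : Fin n → ℝ) : ℝ :=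
  fderiv ℝ f ϑ (Pi.single i 1)

/-- Option-transition kernel
`K_ϑ(o,s',o') = (1 − β(o,s',ϑ))·𝟙[o' = o] + β(o,s',ϑ)·π_O(s',o')`. -/
noncomputable def optKernel {S O : Type*} [DecidableEq O] {n : ℕ}
    (β : O → S → (Fin n → ℝ) → ℝ) (πO : S → O → ℝ) (ϑ : Fin n → ℝ)
    (o : O) (s' : S) (o' : O) : ℝ :=
  (1 - β o s' ϑ) * (if o' = o then 1 else 0) + β o s' ϑ * πO s' o'

/-- Probability of a state–option transition path
`x' = (o_0, s_1, o_1, s_2, …)`, encoded as `y : Fin (T+1) → O × S` with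
`y t = (o_t, s_{t+1})`:
`Pr(x';ϑ) = d₀(o₀,s₁) · ∏_t K_ϑ(o_t, s_{t+1}, o_{t+1}) · Q(o_{t+1}, s_{t+1}, s_{t+2})`. -/
noncomputable def tPathProb {S O : Type*} [DecidableEq O] {n : ℕ}
    (β : O → S → (Fin n → ℝ) → ℝ) (πO : S → O → ℝ) (Q : O → S → S → ℝ)
    (d0 : O × S → ℝ) (T : ℕ) (ϑ : Fin n → ℝ) (y : Fin (T + 1) → O × S) : ℝ :=
  d0 (y 0)
    * ∏ t : Fin T,
        (optKernel β πO ϑ (y t.castSucc).1 (y t.castSucc).2 (y t.succ).1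
          * Q (y t.succ).1 (y t.castSucc).2 (y t.succ).2)

/-- `T`-step Fisher information matrix of the state–option transition path distribution:
`(G^T_ϑ)_{ij} = ∑_{x' : Pr(x';ϑ)>0} Pr(x';ϑ) ∂_i ln Pr(x';ϑ) ∂_j ln Pr(x';ϑ)`. -/
noncomputable def tPathFisher {S O : Type*} [Fintype S] [Fintype O] [DecidableEq O] {n : ℕ}
    (β : O → S → (Fin n → ℝ) → ℝ) (πO : S → O → ℝ) (Q : O → S → S → ℝ)
    (d0 : O × S → ℝ) (T : ℕ) (ϑ : Fin n → ℝ) (i j : Fin n) : ℝ :=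
  ∑ y ∈ Finset.univ.filter (fun y : Fin (T + 1) → O × S =>
      0 < tPathProb β πO Q d0 T ϑ y),
    tPathProb β πO Q d0 T ϑ y
      * pd i (fun ϑ' => Real.log (tPathProb β πO Q d0 T ϑ' y)) ϑ
      * pd j (fun ϑ' => Real.log (tPathProb β πO Q d0 T ϑ' y)) ϑ

/-- Marginal `d_t(s',o)` within the horizon-`T` path distribution: the probability that
the pair (option active upon arrival, state entered) at step `t` equals `(o, s')`. -/
noncomputable def tMarginalIn {S O : Type*} [Fintype S] [Fintype O] [DecidableEq O]
    [DecidableEq S] {n : ℕ}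
    (β : O → S → (Fin n → ℝ) → ℝ) (πO : S → O → ℝ) (Q : O → S → S → ℝ)
    (d0 : O × S → ℝ) (T : ℕ) (ϑ : Fin n → ℝ) (t : Fin (T + 1)) (s' : S) (o : O) : ℝ :=
  ∑ y ∈ Finset.univ.filter (fun y : Fin (T + 1) → O × S => y t = (o, s')),
    tPathProb β πO Q d0 T ϑ y

/-!
Only the option transitions depend on `ϑ`, so the score `∂ ln Pr` of a path is the sum of the
one-step scores `∂ ln K_ϑ(o_t, s_{t+1}, o_{t+1})`. Each of them has conditional mean zero given
the past, because `∑_{o'} ∂K_ϑ(o,s,o') = ∂ 1 = 0`; hence all cross terms of the Fisher information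
vanish and it is the sum over time of the expected one-step covariances
`∑_{o'} ∂ᵢK ∂ⱼK / K`. Since `K` is affine in `β` with slope `π_O(s,o') − 𝟙[o' = o]`, this
covariance is `∂ᵢβ ∂ⱼβ (1 − π_O(s,o)) / (β β') = −∂ᵢ ln β · ∂ⱼ ln β'`.
-/

section PartialDerivative

variable {n : ℕ} {f : (Fin n → ℝ) → ℝ} {ϑ : Fin n → ℝ} (i : Fin n)

theorem pd_const_add (c : ℝ) : pd i (fun x => c + f x) ϑ = pd i f ϑ := by
  rw [pd, fderiv_const_add, pd]

theorem pd_const_add_mul (hf : DifferentiableAt ℝ f ϑ) (a c : ℝ) :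
    pd i (fun x => a + c * f x) ϑ = c * pd i f ϑ := by
  rw [pd_const_add, pd, fderiv_const_mul hf, pd]
  rfl

theorem pd_sum {ι : Type*} (s : Finset ι) {g : ι → (Fin n → ℝ) → ℝ}
    (hg : ∀ t ∈ s, DifferentiableAt ℝ (g t) ϑ) :
    pd i (fun x => ∑ t ∈ s, g t x) ϑ = ∑ t ∈ s, pd i (g t) ϑ := by
  rw [pd, fderiv_fun_sum hg, sum_apply]
  rfl

theorem pd_log (hf : DifferentiableAt ℝ f ϑ) (h : f ϑ ≠ 0) :
    pd i (fun x => Real.log (f x)) ϑ = pd i f ϑ / f ϑ := by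
  rw [pd, fderiv.log hf h, smul_apply, smul_eq_mul, pd, inv_mul_eq_div]

end PartialDerivative

section PathWeight

variable {α : Type*} (μ : α → ℝ) (k : α → α → ℝ)

noncomputable def pathWeight (T : ℕ) (y : Fin (T + 1) → α) : ℝ :=
  μ (y 0) * ∏ t : Fin T, k (y t.castSucc) (y t.succ)

def pathSum (f : α → α → ℝ) (T : ℕ) (y : Fin (T + 1) → α) : ℝ :=
  ∑ t : Fin T, f (y t.castSucc) (y t.succ)

theorem pathWeight_nonneg (hμ : ∀ a, 0 ≤ μ a) (hk : ∀ a b, 0 ≤ k a b) (T : ℕ)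
    (y : Fin (T + 1) → α) : 0 ≤ pathWeight μ k T y :=
  mul_nonneg (hμ _) (Finset.prod_nonneg fun _ _ => hk _ _)

theorem pathWeight_ne_zero_iff {T : ℕ} {y : Fin (T + 1) → α} :
    pathWeight μ k T y ≠ 0 ↔ μ (y 0) ≠ 0 ∧ ∀ t : Fin T, k (y t.castSucc) (y t.succ) ≠ 0 := by
  simp [pathWeight, Finset.prod_ne_zero_iff]

theorem log_pathWeight {T : ℕ} {y : Fin (T + 1) → α} (h : pathWeight μ k T y ≠ 0) :
    Real.log (pathWeight μ k T y)
      = Real.log (μ (y 0)) + pathSum (fun a b => Real.log (k a b)) T y := by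
  obtain ⟨hμ, hk⟩ := (pathWeight_ne_zero_iff μ k).mp h
  rw [pathWeight, Real.log_mul hμ (Finset.prod_ne_zero_iff.mpr fun t _ => hk t),
    Real.log_prod fun t _ => hk t, pathSum]

theorem pathWeight_snoc (T : ℕ) (y : Fin (T + 1) → α) (a : α) :
    pathWeight μ k (T + 1) (Fin.snoc y a) = pathWeight μ k T y * k (y (Fin.last T)) a := by
  have h0 : (Fin.snoc y a : Fin (T + 2) → α) 0 = y 0 := by
    rw [← Fin.castSucc_zero', Fin.snoc_castSucc]
  simp only [pathWeight, Fin.prod_univ_castSucc, h0, Fin.succ_castSucc, Fin.snoc_castSucc,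
    Fin.succ_last, Fin.snoc_last]
  ring

theorem pathSum_snoc (f : α → α → ℝ) (T : ℕ) (y : Fin (T + 1) → α) (a : α) :
    pathSum f (T + 1) (Fin.snoc y a) = pathSum f T y + f (y (Fin.last T)) a := by
  simp only [pathSum, Fin.sum_univ_castSucc, Fin.succ_castSucc, Fin.snoc_castSucc,
    Fin.succ_last, Fin.snoc_last]

variable [Fintype α]

theorem sum_pathWeight_succ (T : ℕ) (g : (Fin (T + 2) → α) → ℝ) :
    ∑ y, pathWeight μ k (T + 1) y * g y
      = ∑ y, pathWeight μ k T y * ∑ a, k (y (Fin.last T)) a * g (Fin.snoc y a) := by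
  rw [← Equiv.sum_comp (Fin.snocEquiv fun _ => α), Fintype.sum_prod_type, Finset.sum_comm]
  refine Finset.sum_congr rfl fun y _ => ?_
  rw [Finset.mul_sum]
  refine Finset.sum_congr rfl fun a _ => ?_
  change pathWeight μ k (T + 1) (Fin.snoc y a) * g (Fin.snoc y a) = _
  rw [pathWeight_snoc, mul_assoc]

variable {k} (hk : ∀ a, ∑ b, k a b = 1)
include hk

theorem sum_pathWeight_succ_comp_castSucc (T : ℕ) (t : Fin (T + 1)) (g : α → ℝ) :
    ∑ y, pathWeight μ k (T + 1) y * g (y t.castSucc) = ∑ y, pathWeight μ k T y * g (y t) := by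
  rw [sum_pathWeight_succ]
  refine Finset.sum_congr rfl fun y _ => ?_
  simp only [Fin.snoc_castSucc, ← Finset.sum_mul, hk, one_mul]

/-- The summands of centred additive functionals are martingale differences, so the cross terms
between different time steps vanish and only the one-step covariances survive. -/
theorem sum_pathWeight_mul_pathSum_mul_pathSum {f g : α → α → ℝ}
    (hf : ∀ a, ∑ b, k a b * f a b = 0) (hg : ∀ a, ∑ b, k a b * g a b = 0) (T : ℕ) :
    ∑ y, pathWeight μ k T y * pathSum f T y * pathSum g T y
      = ∑ t : Fin T, ∑ y, pathWeight μ k T y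
          * ∑ b, k (y t.castSucc) b * f (y t.castSucc) b * g (y t.castSucc) b := by
  set c : α → ℝ := fun a => ∑ b, k a b * f a b * g a b
  show _ = ∑ t : Fin T, ∑ y, pathWeight μ k T y * c (y t.castSucc)
  have step (F G : ℝ) (a : α) : ∑ b, k a b * ((F + f a b) * (G + g a b)) = F * G + c a := by
    have expand : ∀ b, k a b * ((F + f a b) * (G + g a b))
        = F * G * k a b + F * (k a b * g a b) + G * (k a b * f a b) + k a b * f a b * g a b :=
      fun b => by ring
    simp only [expand, Finset.sum_add_distrib, ← Finset.mul_sum, hk, hf, hg]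
    ring
  induction T with
  | zero => simp [pathSum]
  | succ T ih =>
    calc ∑ y, pathWeight μ k (T + 1) y * pathSum f (T + 1) y * pathSum g (T + 1) y
        = ∑ y, pathWeight μ k T y
            * ∑ a, k (y (Fin.last T)) a
              * ((pathSum f T y + f (y (Fin.last T)) a)
                * (pathSum g T y + g (y (Fin.last T)) a)) := by
          simp only [mul_assoc, sum_pathWeight_succ, pathSum_snoc]
      _ = ∑ y, pathWeight μ k T y * pathSum f T y * pathSum g T y
            + ∑ y, pathWeight μ k T y * c (y (Fin.last T)) := by
          simp only [step]
          simp only [mul_add, Finset.sum_add_distrib, mul_assoc]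
      _ = ∑ t : Fin (T + 1), ∑ y, pathWeight μ k (T + 1) y * c (y t.castSucc) := by
          rw [ih, Fin.sum_univ_castSucc]
          simp only [sum_pathWeight_succ_comp_castSucc μ hk]

end PathWeight

section OptionChain

variable {S O : Type*} [DecidableEq O] {n : ℕ} (β : O → S → (Fin n → ℝ) → ℝ) (πO : S → O → ℝ)
  (Q : O → S → S → ℝ) (ϑ : Fin n → ℝ)

noncomputable def optStateKernel (a b : O × S) : ℝ :=
  optKernel β πO ϑ a.1 a.2 b.1 * Q b.1 a.2 b.2

noncomputable def stepScore (i : Fin n) (a b : O × S) : ℝ :=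
  pd i (fun ϑ' => Real.log (optKernel β πO ϑ' a.1 a.2 b.1)) ϑ

theorem tPathProb_eq_pathWeight (d0 : O × S → ℝ) (T : ℕ) :
    tPathProb β πO Q d0 T ϑ = pathWeight d0 (optStateKernel β πO Q ϑ) T :=
  rfl

variable {β πO ϑ} {o o' : O} {s : S}

theorem optKernel_self : optKernel β πO ϑ o s o = 1 - β o s ϑ + β o s ϑ * πO s o := by
  simp [optKernel]

theorem optKernel_of_ne (h : o' ≠ o) : optKernel β πO ϑ o s o' = β o s ϑ * πO s o' := by
  simp [optKernel, h]

theorem optKernel_pos (h0 : 0 < β o s ϑ) (h1 : β o s ϑ < 1) (hπ : 0 < πO s o') :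
    0 < optKernel β πO ϑ o s o' := by
  unfold optKernel
  split_ifs <;> nlinarith

theorem sum_optKernel [Fintype O] (hπ : ∑ o', πO s o' = 1) :
    ∑ o', optKernel β πO ϑ o s o' = 1 := by
  simp [optKernel, Finset.sum_add_distrib, ← Finset.mul_sum, hπ]

theorem optKernel_eq_add_mul :
    (fun ϑ' => optKernel β πO ϑ' o s o')
      = fun ϑ' => (if o' = o then 1 else 0) + (πO s o' - if o' = o then 1 else 0) * β o s ϑ' := by
  funext ϑ'
  simp only [optKernel]
  ring

variable (i : Fin n) (hβ : DifferentiableAt ℝ (β o s) ϑ)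
include hβ

theorem pd_optKernel :
    pd i (fun ϑ' => optKernel β πO ϑ' o s o') ϑ
      = (πO s o' - if o' = o then 1 else 0) * pd i (β o s) ϑ := by
  rw [optKernel_eq_add_mul, pd_const_add_mul i hβ]

theorem differentiableAt_optKernel : DifferentiableAt ℝ (fun ϑ' => optKernel β πO ϑ' o s o') ϑ := by
  rw [optKernel_eq_add_mul]
  exact (hβ.const_mul _).const_add _

theorem optKernel_mul_pd_log_optKernel (hK : optKernel β πO ϑ o s o' ≠ 0) :
    optKernel β πO ϑ o s o' * pd i (fun ϑ' => Real.log (optKernel β πO ϑ' o s o')) ϑ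
      = (πO s o' - if o' = o then 1 else 0) * pd i (β o s) ϑ := by
  rw [pd_log i (differentiableAt_optKernel hβ) hK, mul_div_cancel₀ _ hK, pd_optKernel i hβ]

end OptionChain

section OptionChainSums

variable {S O : Type*} [Fintype O] [DecidableEq O] {n : ℕ} {β : O → S → (Fin n → ℝ) → ℝ}
  {πO : S → O → ℝ} {ϑ : Fin n → ℝ} {o : O} {s : S}

theorem sum_sq_div_optKernel (hπ : ∑ o', πO s o' = 1) (hK : ∀ o', optKernel β πO ϑ o s o' ≠ 0)
    (hβ0 : β o s ϑ ≠ 0) :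
    ∑ o', (πO s o' - if o' = o then 1 else 0) ^ 2 / optKernel β πO ϑ o s o'
      = (1 - πO s o) / (β o s ϑ * optKernel β πO ϑ o s o) := by
  have others : ∑ o' ∈ Finset.univ.erase o,
      (πO s o' - if o' = o then 1 else 0) ^ 2 / optKernel β πO ϑ o s o'
        = (1 - πO s o) / β o s ϑ := by
    rw [← hπ, ← Finset.sum_erase_eq_sub (Finset.mem_univ o), Finset.sum_div]
    refine Finset.sum_congr rfl fun o' ho' => ?_
    have hne := Finset.ne_of_mem_erase ho'
    have hπ0 : πO s o' ≠ 0 := right_ne_zero_of_mul (optKernel_of_ne hne ▸ hK o')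
    rw [if_neg hne, sub_zero, optKernel_of_ne hne]
    field_simp
  have hKo := hK o
  rw [← Finset.add_sum_erase _ _ (Finset.mem_univ o), others, if_pos rfl]
  rw [optKernel_self] at hKo ⊢
  rw [div_add_div _ _ hKo hβ0, div_eq_div_iff (mul_ne_zero hKo hβ0) (mul_ne_zero hβ0 hKo)]
  ring

variable (i j : Fin n)

/-- The score of the option transition is centred: `∑_{o'} ∂ᵢK_ϑ(o,s,o') = ∂ᵢ 1 = 0`. -/
theorem sum_optKernel_mul_pd_log (hπ : ∑ o', πO s o' = 1) (hK : ∀ o', optKernel β πO ϑ o s o' ≠ 0)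
    (hβ : DifferentiableAt ℝ (β o s) ϑ) :
    ∑ o', optKernel β πO ϑ o s o' * pd i (fun ϑ' => Real.log (optKernel β πO ϑ' o s o')) ϑ = 0 := by
  simp only [optKernel_mul_pd_log_optKernel i hβ (hK _), ← Finset.sum_mul, Finset.sum_sub_distrib,
    hπ, Finset.sum_ite_eq', Finset.mem_univ, if_true, sub_self, zero_mul]

theorem sum_optKernel_mul_pd_log_mul_pd_log (hπ : ∑ o', πO s o' = 1)
    (hK : ∀ o', optKernel β πO ϑ o s o' ≠ 0) (hβ0 : β o s ϑ ≠ 0)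
    (hβ : DifferentiableAt ℝ (β o s) ϑ) :
    ∑ o', optKernel β πO ϑ o s o' * pd i (fun ϑ' => Real.log (optKernel β πO ϑ' o s o')) ϑ
        * pd j (fun ϑ' => Real.log (optKernel β πO ϑ' o s o')) ϑ
      = -(pd i (fun ϑ' => Real.log (β o s ϑ')) ϑ
          * pd j (fun ϑ' => Real.log (optKernel β πO ϑ' o s o)) ϑ) := by
  have term : ∀ o', optKernel β πO ϑ o s o' * pd i (fun ϑ' => Real.log (optKernel β πO ϑ' o s o')) ϑ
        * pd j (fun ϑ' => Real.log (optKernel β πO ϑ' o s o')) ϑ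
      = (πO s o' - if o' = o then 1 else 0) ^ 2 / optKernel β πO ϑ o s o'
        * (pd i (β o s) ϑ * pd j (β o s) ϑ) := by
    intro o'
    rw [optKernel_mul_pd_log_optKernel i hβ (hK o'),
      pd_log j (differentiableAt_optKernel hβ) (hK o'),
      pd_optKernel j hβ]
    ring
  rw [Finset.sum_congr rfl fun o' _ => term o', ← Finset.sum_mul, sum_sq_div_optKernel hπ hK hβ0,
    pd_log i hβ hβ0, pd_log j (differentiableAt_optKernel hβ) (hK o), pd_optKernel j hβ, if_pos rfl]
  have hKo := hK o
  field_simp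
  ring

end OptionChainSums

section StateOptionChain

variable {S O : Type*} [Fintype S] [Fintype O] [DecidableEq O] {n : ℕ}
  {β : O → S → (Fin n → ℝ) → ℝ} {πO : S → O → ℝ} {Q : O → S → S → ℝ} {ϑ : Fin n → ℝ}

theorem sum_optStateKernel_mul (hQ : ∀ o s', ∑ s'', Q o s' s'' = 1) (a : O × S) (φ : O → ℝ) :
    ∑ b, optStateKernel β πO Q ϑ a b * φ b.1 = ∑ o', optKernel β πO ϑ a.1 a.2 o' * φ o' := by
  simp only [optStateKernel, Fintype.sum_prod_type, mul_right_comm _ (Q _ _ _),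
    ← Finset.mul_sum, hQ, mul_one]

theorem sum_optStateKernel (hπ : ∀ s, ∑ o', πO s o' = 1) (hQ : ∀ o s', ∑ s'', Q o s' s'' = 1)
    (a : O × S) : ∑ b, optStateKernel β πO Q ϑ a b = 1 := by
  have h := sum_optStateKernel_mul (β := β) (πO := πO) (ϑ := ϑ) hQ a fun _ => 1
  simp only [mul_one] at h
  rw [h, sum_optKernel (hπ _)]

variable (i j : Fin n) (hπ : ∀ s, ∑ o', πO s o' = 1) (hQ : ∀ o s', ∑ s'', Q o s' s'' = 1)
  (hK : ∀ o s o', optKernel β πO ϑ o s o' ≠ 0) (hβ : ∀ o s, DifferentiableAt ℝ (β o s) ϑ)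
include hπ hQ hK hβ

theorem sum_optStateKernel_mul_stepScore (a : O × S) :
    ∑ b, optStateKernel β πO Q ϑ a b * stepScore β πO ϑ i a b = 0 :=
  (sum_optStateKernel_mul hQ a _).trans (sum_optKernel_mul_pd_log i (hπ _) (hK _ _) (hβ _ _))

theorem sum_optStateKernel_mul_stepScore_mul_stepScore (hβ0 : ∀ o s, β o s ϑ ≠ 0) (a : O × S) :
    ∑ b, optStateKernel β πO Q ϑ a b * stepScore β πO ϑ i a b * stepScore β πO ϑ j a b
      = -(pd i (fun ϑ' => Real.log (β a.1 a.2 ϑ')) ϑ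
          * pd j (fun ϑ' => Real.log (optKernel β πO ϑ' a.1 a.2 a.1)) ϑ) := by
  simp only [mul_assoc]
  refine (sum_optStateKernel_mul hQ a fun o' =>
    pd i (fun ϑ' => Real.log (optKernel β πO ϑ' a.1 a.2 o')) ϑ
      * pd j (fun ϑ' => Real.log (optKernel β πO ϑ' a.1 a.2 o')) ϑ).trans ?_
  simp only [← mul_assoc]
  exact sum_optKernel_mul_pd_log_mul_pd_log i j (hπ _) (hK _ _) (hβ0 _ _) (hβ _ _)

end StateOptionChain

section PathFisher

variable {S O : Type*} [DecidableEq O] {n : ℕ}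
  {β : O → S → (Fin n → ℝ) → ℝ} {πO : S → O → ℝ} {Q : O → S → S → ℝ} {d0 : O × S → ℝ}
  {T : ℕ} {ϑ : Fin n → ℝ}

/-- Only the option transitions depend on `ϑ`, so the path score is the sum of the step scores. -/
theorem pd_log_tPathProb (hK : ∀ ϑ o s o', optKernel β πO ϑ o s o' ≠ 0)
    (hβ : ∀ o s, DifferentiableAt ℝ (β o s) ϑ) (i : Fin n) {y : Fin (T + 1) → O × S}
    (hy : tPathProb β πO Q d0 T ϑ y ≠ 0) :
    pd i (fun ϑ' => Real.log (tPathProb β πO Q d0 T ϑ' y)) ϑ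
      = pathSum (stepScore β πO ϑ i) T y := by
  obtain ⟨hd0, hstep⟩ := (pathWeight_ne_zero_iff d0 (optStateKernel β πO Q ϑ)).mp hy
  have hQ (t : Fin T) : Q (y t.succ).1 (y t.castSucc).2 (y t.succ).2 ≠ 0 :=
    right_ne_zero_of_mul (hstep t)
  have hlog : (fun ϑ' => Real.log (tPathProb β πO Q d0 T ϑ' y))
      = fun ϑ' => (Real.log (d0 (y 0)) + pathSum (fun a b => Real.log (Q b.1 a.2 b.2)) T y)
          + ∑ t : Fin T,
              Real.log (optKernel β πO ϑ' (y t.castSucc).1 (y t.castSucc).2 (y t.succ).1) := by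
    funext ϑ'
    have hne : tPathProb β πO Q d0 T ϑ' y ≠ 0 :=
      (pathWeight_ne_zero_iff d0 (optStateKernel β πO Q ϑ')).mpr
        ⟨hd0, fun t => mul_ne_zero (hK _ _ _ _) (hQ t)⟩
    rw [tPathProb_eq_pathWeight, log_pathWeight d0 (optStateKernel β πO Q ϑ') hne, add_assoc,
      pathSum, pathSum, ← Finset.sum_add_distrib]
    refine congrArg _ (Finset.sum_congr rfl fun t _ => ?_)
    rw [optStateKernel, Real.log_mul (hK _ _ _ _) (hQ t), add_comm]
  rw [hlog, pd_const_add,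
    pd_sum _ _ fun t _ => (differentiableAt_optKernel (hβ _ _)).log (hK _ _ _ _)]
  rfl

variable [Fintype S] [Fintype O]

theorem tPathFisher_eq_sum_pathSum (hd0 : ∀ p, 0 ≤ d0 p) (hQ : ∀ o s s', 0 ≤ Q o s s')
    (hK : ∀ ϑ o s o', 0 < optKernel β πO ϑ o s o') (hβ : ∀ o s, DifferentiableAt ℝ (β o s) ϑ)
    (i j : Fin n) :
    tPathFisher β πO Q d0 T ϑ i j
      = ∑ y, tPathProb β πO Q d0 T ϑ y * pathSum (stepScore β πO ϑ i) T y
          * pathSum (stepScore β πO ϑ j) T y := by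
  have hK' ϑ o s o' := (hK ϑ o s o').ne'
  unfold tPathFisher
  rw [Finset.sum_congr rfl fun y hy => by
    rw [pd_log_tPathProb hK' hβ i (Finset.mem_filter.mp hy).2.ne',
      pd_log_tPathProb hK' hβ j (Finset.mem_filter.mp hy).2.ne']]
  refine Finset.sum_filter_of_ne fun y _ hy => ?_
  have hk_nonneg a b : 0 ≤ optStateKernel β πO Q ϑ a b := mul_nonneg (hK _ _ _ _).le (hQ _ _ _)
  exact (pathWeight_nonneg _ _ hd0 hk_nonneg T y).lt_of_ne'
    (left_ne_zero_of_mul (left_ne_zero_of_mul hy))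

theorem sum_tMarginalIn_mul [DecidableEq S] (t : Fin (T + 1)) (h : O × S → ℝ) :
    ∑ s', ∑ o, tMarginalIn β πO Q d0 T ϑ t s' o * h (o, s')
      = ∑ y, tPathProb β πO Q d0 T ϑ y * h (y t) := by
  symm
  rw [← Finset.sum_fiberwise Finset.univ (fun y => y t)
    (fun y => tPathProb β πO Q d0 T ϑ y * h (y t)), Fintype.sum_prod_type, Finset.sum_comm]
  refine Finset.sum_congr rfl fun s' _ => Finset.sum_congr rfl fun o _ => ?_
  rw [tMarginalIn, Finset.sum_mul]
  exact Finset.sum_congr rfl fun y hy => by rw [(Finset.mem_filter.mp hy).2]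

end PathFisher

theorem transition_path_fisher_decomposition_general
    {S O : Type*} [Fintype S] [Fintype O] [DecidableEq O] [DecidableEq S]
    {n : ℕ}
    (β : O → S → (Fin n → ℝ) → ℝ)
    (hβ0 : ∀ o s ϑ, 0 < β o s ϑ) (hβ1 : ∀ o s ϑ, β o s ϑ < 1)
    (hβsmooth : ∀ o s, ContDiff ℝ 2 (β o s))
    (πO : S → O → ℝ) (hπO : ∀ s o, 0 < πO s o) (hπOsum : ∀ s, ∑ o, πO s o = 1)
    (Q : O → S → S → ℝ) (hQ : ∀ o s' s'', 0 ≤ Q o s' s'')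
    (hQsum : ∀ o s', ∑ s'', Q o s' s'' = 1)
    (d0 : O × S → ℝ) (hd0 : ∀ p, 0 ≤ d0 p)
    (T : ℕ) (ϑ : Fin n → ℝ) (i j : Fin n) :
    tPathFisher β πO Q d0 T ϑ i j
      = -∑ t : Fin T, ∑ s', ∑ o,
          tMarginalIn β πO Q d0 T ϑ t.castSucc s' o
            * pd i (fun ϑ' => Real.log (β o s' ϑ')) ϑ
            * pd j (fun ϑ' => Real.log (1 - β o s' ϑ' + β o s' ϑ' * πO s' o)) ϑ := by
  have hβ o s : DifferentiableAt ℝ (β o s) ϑ := (hβsmooth o s).differentiable (by norm_num) ϑ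
  have hK ϑ o s o' : 0 < optKernel β πO ϑ o s o' :=
    optKernel_pos (hβ0 o s ϑ) (hβ1 o s ϑ) (hπO s o')
  have hK' o s o' := (hK ϑ o s o').ne'
  rw [tPathFisher_eq_sum_pathSum hd0 hQ hK hβ, tPathProb_eq_pathWeight,
    sum_pathWeight_mul_pathSum_mul_pathSum d0 (sum_optStateKernel hπOsum hQsum)
      (sum_optStateKernel_mul_stepScore i hπOsum hQsum hK' hβ)
      (sum_optStateKernel_mul_stepScore j hπOsum hQsum hK' hβ),
    ← Finset.sum_neg_distrib]
  refine Finset.sum_congr rfl fun t _ => ?_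
  simp only [sum_optStateKernel_mul_stepScore_mul_stepScore i j hπOsum hQsum hK' hβ
    fun o s => (hβ0 o s ϑ).ne', ← tPathProb_eq_pathWeight]
  rw [← sum_tMarginalIn_mul t.castSucc fun p => -(pd i (fun ϑ' => Real.log (β p.1 p.2 ϑ')) ϑ
    * pd j (fun ϑ' => Real.log (optKernel β πO ϑ' p.1 p.2 p.1)) ϑ)]
  simp only [mul_neg, Finset.sum_neg_distrib, optKernel_self, mul_assoc]

/-- Finite-horizon decomposition of the state-option transition path Fisher information
matrix: it equals minus the sum over time steps of the marginal-weighted outer products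
of the termination score `∂ ln β` and the continuation score `∂ ln β'`, where
`β'(o,s',ϑ) = 1 − β(o,s',ϑ) + β(o,s',ϑ)·π_O(s',o)`. -/
theorem transition_path_fisher_decomposition
    {S O : Type*} [Fintype S] [Fintype O] [DecidableEq O] [DecidableEq S]
    [Nonempty S] [Nonempty O] {n : ℕ}
    (β : O → S → (Fin n → ℝ) → ℝ)
    (hβ0 : ∀ o s ϑ, 0 < β o s ϑ) (hβ1 : ∀ o s ϑ, β o s ϑ < 1)
    (hβsmooth : ∀ o s, ContDiff ℝ 2 (β o s))
    (πO : S → O → ℝ) (hπO : ∀ s o, 0 < πO s o) (hπOsum : ∀ s, ∑ o, πO s o = 1)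
    (Q : O → S → S → ℝ) (hQ : ∀ o s' s'', 0 ≤ Q o s' s'')
    (hQsum : ∀ o s', ∑ s'', Q o s' s'' = 1)
    (d0 : O × S → ℝ) (hd0 : ∀ p, 0 ≤ d0 p) (hd0sum : ∑ p, d0 p = 1)
    (T : ℕ) (ϑ : Fin n → ℝ) (i j : Fin n) :
    tPathFisher β πO Q d0 T ϑ i j
      = -∑ t : Fin T, ∑ s', ∑ o,
          tMarginalIn β πO Q d0 T ϑ t.castSucc s' o
            * pd i (fun ϑ' => Real.log (β o s' ϑ')) ϑ
            * pd j (fun ϑ' => Real.log (1 - β o s' ϑ' + β o s' ϑ' * πO s' o)) ϑ :=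
  transition_path_fisher_decomposition_general β hβ0 hβ1 hβsmooth πO hπO hπOsum Q hQ hQsum d0 hd0 T
    ϑ i j
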